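/- (Theorem 4, part 2: P-stationary points are local minimizers.) Suppose (w*, d*, b*, u*) is a P-stationary point with some parameter γ > 0. Then (w*, d*, b*, u*) is a local minimizer of the constrained problem: minimize (1/2) wᵀ 𝒦(d) w + C‖u₊‖₀ over (w, d, b, u) ∈ ℝ^m × ℝ^L × ℝ × ℝ^m subject to d ∈ Δ and u + 𝒜(d) w + b y = 1. That is, (w*, d*, b*, u*) is feasible and there exists δ > 0 such that for all feasible (w, d, b, u) with ‖(w, d, b, u) − (w*, d*, b*, u*)‖ < δ one has (1/2) w*ᵀ 𝒦(d*) w* + C‖u*₊‖₀ ≤ (1/2) wᵀ 𝒦(d) w + C‖u₊‖₀. -/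

import Mathlib

open Matrix

/-- `‖v₊‖₀`: the number of strictly positive components of `v`, as a real number. -/
noncomputable def l0pos {m : ℕ} (v : Fin m → ℝ) : ℝ :=
  ((Finset.univ.filter (fun i => 0 < v i)).card : ℝ)

/-- The conditions for `(w, d, b, u)` to be a P-stationary point with parameter `γ > 0`,
with explicitly given multipliers `(θ, α, lam)`. -/
def IsPStationaryWith {m L : ℕ} (K : Fin L → Matrix (Fin m) (Fin m) ℝ)
    (y : Fin m → ℝ) (C γ : ℝ)
    (w : Fin m → ℝ) (d : Fin L → ℝ) (b : ℝ) (u : Fin m → ℝ)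
    (θ : Fin L → ℝ) (α : ℝ) (lam : Fin m → ℝ) : Prop :=
  (∀ ℓ, 0 ≤ d ℓ) ∧
  (∑ ℓ, d ℓ) = 1 ∧
  (∀ ℓ, 0 ≤ θ ℓ) ∧
  (∀ ℓ, θ ℓ * d ℓ = 0) ∧
  u + (Matrix.diagonal y * ∑ ℓ, d ℓ • K ℓ).mulVec w + b • y = 1 ∧
  w + (Matrix.diagonal y).mulVec lam = 0 ∧
  (∀ ℓ, -(1 / 2) * (w ⬝ᵥ (K ℓ).mulVec w) + α - θ ℓ = 0) ∧
  y ⬝ᵥ lam = 0 ∧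
  ∀ v : Fin m → ℝ,
    C * l0pos u + (1 / (2 * γ)) * ∑ i, (u i - (u i - γ * lam i)) ^ 2 ≤
    C * l0pos v + (1 / (2 * γ)) * ∑ i, (v i - (u i - γ * lam i)) ^ 2

/-- `(w, d, b, u)` is a P-stationary point with parameter `γ > 0`. -/
def IsPStationary {m L : ℕ} (K : Fin L → Matrix (Fin m) (Fin m) ℝ)
    (y : Fin m → ℝ) (C γ : ℝ)
    (w : Fin m → ℝ) (d : Fin L → ℝ) (b : ℝ) (u : Fin m → ℝ) : Prop :=
  ∃ (θ : Fin L → ℝ) (α : ℝ) (lam : Fin m → ℝ),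
    IsPStationaryWith K y C γ w d b u θ α lam

/-! For every feasible `(w, d, b, u)`, the constraint together with `w* = -D_y λ` and `yᵀλ = 0`
gives `λᵀu = w*ᵀ𝒦(d)w + Σᵢ λᵢ`, while the kernel conditions give
`w*ᵀ𝒦(d)w* = 2α - 2 Σ_ℓ d_ℓ θ_ℓ ≤ 2α` on the simplex, with equality at `d*` by complementarity.
Since `𝒦(d)` is positive semidefinite, `½ wᵀ𝒦(d)w ≥ w*ᵀ𝒦(d)w - ½ w*ᵀ𝒦(d)w* ≥ λᵀu - Σᵢ λᵢ - α`,
with equality at the P-stationary point. It remains that `u*` locally minimizes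
`C‖u₊‖₀ + λᵀu`; this separates over coordinates, and the proximal condition forces `u*ᵢ = 0`
and `λᵢ < 0` wherever `λᵢ ≠ 0`, so that near `u*ᵢ` the jump `C` dominates the linear term. -/

theorem mul_l0pos_add_sum {m : ℕ} (C : ℝ) (f : Fin m → ℝ) (v : Fin m → ℝ) :
    C * l0pos v + ∑ i, f i = ∑ i, (C * (if 0 < v i then 1 else 0) + f i) := by
  rw [l0pos, ← Finset.sum_boole, Finset.mul_sum, Finset.sum_add_distrib]

theorem le_of_forall_sum_le {ι α : Type*} [Fintype ι] {g : ι → α → ℝ} {u : ι → α}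
    (h : ∀ v : ι → α, ∑ i, g i (u i) ≤ ∑ i, g i (v i)) (i : ι) (t : α) :
    g i (u i) ≤ g i t := by
  classical
  have hv := h (Function.update u i t)
  rw [← Finset.add_sum_erase _ _ (Finset.mem_univ i),
    ← Finset.add_sum_erase _ _ (Finset.mem_univ i), Function.update_self] at hv
  have hrest : ∑ j ∈ Finset.univ.erase i, g j (Function.update u i t j) =
      ∑ j ∈ Finset.univ.erase i, g j (u j) :=
    Finset.sum_congr rfl fun j hj => by rw [Function.update_of_ne (Finset.ne_of_mem_erase hj)]
  linarith

theorem isLocalMin_sum_apply {ι α : Type*} [Fintype ι] [TopologicalSpace α] {g : ι → α → ℝ}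
    {u : ι → α} (h : ∀ i, IsLocalMin (g i) (u i)) :
    IsLocalMin (fun v : ι → α => ∑ i, g i (v i)) u :=
  (Filter.eventually_all.2 fun i => (h i).comp_continuous (g := fun v : ι → α => v i)
    (continuous_apply i).continuousAt).mono
    fun _ hv => Finset.sum_le_sum fun i _ => hv i

theorem eq_zero_and_neg_of_l0_prox {C γ lam u : ℝ} (hC : 0 ≤ C) (hγ : 0 < γ)
    (h : ∀ t : ℝ, C * (if 0 < u then 1 else 0) + 1 / (2 * γ) * (u - (u - γ * lam)) ^ 2 ≤
      C * (if 0 < t then 1 else 0) + 1 / (2 * γ) * (t - (u - γ * lam)) ^ 2)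
    (hlam : lam ≠ 0) : u = 0 ∧ lam < 0 := by
  have h' : ∀ t : ℝ, 2 * γ * C * (if 0 < u then 1 else 0) + (γ * lam) ^ 2 ≤
      2 * γ * C * (if 0 < t then 1 else 0) + (t - (u - γ * lam)) ^ 2 := by
    intro t
    have := mul_le_mul_of_nonneg_left (h t) (by positivity : (0 : ℝ) ≤ 2 * γ)
    field_simp at this
    linarith
  -- Test the proximal inequality at the unpenalized minimizer `u - γ lam` and at the kink `0`.
  have hsq : 0 < (γ * lam) ^ 2 := by positivity
  have hγC : 0 ≤ 2 * γ * C := by positivity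
  have hz := h' (u - γ * lam)
  have hu : ¬ 0 < u := fun hu => by
    rw [if_pos hu] at hz; split_ifs at hz <;> nlinarith
  have hz_pos : 0 < u - γ * lam := by
    by_contra hz'; rw [if_neg hu, if_neg hz'] at hz; nlinarith
  have h0 := h' 0
  rw [if_neg hu, if_neg (lt_irrefl 0)] at h0
  have hu0 : u = 0 := by nlinarith
  subst hu0
  exact ⟨rfl, by nlinarith⟩

theorem isLocalMin_mul_ite_add_mul {C lam u : ℝ} (hC : 0 < C) (h : lam = 0 ∨ (u = 0 ∧ lam < 0)) :
    IsLocalMin (fun t : ℝ => C * (if 0 < t then 1 else 0) + lam * t) u := by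
  rcases h with rfl | ⟨rfl, hlam⟩
  · by_cases hu : 0 < u
    · filter_upwards [lt_mem_nhds hu] with t ht
      simp [hu, ht]
    · exact Filter.Eventually.of_forall fun t => by
        dsimp only
        split_ifs <;> simp [hC.le]
  · filter_upwards [Iio_mem_nhds (show (0 : ℝ) < C / -lam by have := neg_pos.2 hlam; positivity)]
      with t ht
    rw [Set.mem_Iio, lt_div_iff₀ (neg_pos.2 hlam)] at ht
    split_ifs <;> nlinarith

theorem dotProduct_sum_smul_mulVec {n ι : Type*} [Fintype n] [Fintype ι]
    (K : ι → Matrix n n ℝ) (d : ι → ℝ) (a b : n → ℝ) :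
    a ⬝ᵥ (∑ ℓ, d ℓ • K ℓ) *ᵥ b = ∑ ℓ, d ℓ * (a ⬝ᵥ K ℓ *ᵥ b) := by
  simp only [sum_mulVec, smul_mulVec, dotProduct_sum, dotProduct_smul, smul_eq_mul]

theorem Matrix.PosSemidef.two_mul_dotProduct_mulVec_sub_le {n : Type*} [Fintype n]
    {M : Matrix n n ℝ} (hM : M.PosSemidef) (a b : n → ℝ) :
    2 * (b ⬝ᵥ M *ᵥ a) - b ⬝ᵥ M *ᵥ b ≤ a ⬝ᵥ M *ᵥ a := by
  have hsymm : a ⬝ᵥ M *ᵥ b = b ⬝ᵥ M *ᵥ a := by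
    rw [dotProduct_mulVec, ← mulVec_transpose, ← conjTranspose_eq_transpose_of_trivial,
      hM.isHermitian.eq, dotProduct_comm]
  have := hM.dotProduct_mulVec_nonneg (a - b)
  simp only [star_trivial, mulVec_sub, dotProduct_sub, sub_dotProduct] at this
  linarith

theorem dotProduct_eq_of_constraint {n : Type*} [Fintype n] [DecidableEq n]
    {y lam w' u w : n → ℝ} {b : ℝ} {M : Matrix n n ℝ}
    (hw' : w' + diagonal y *ᵥ lam = 0) (hy : y ⬝ᵥ lam = 0)
    (hc : u + (diagonal y * M) *ᵥ w + b • y = 1) :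
    lam ⬝ᵥ u = w' ⬝ᵥ M *ᵥ w + ∑ i, lam i := by
  obtain rfl := eq_neg_of_add_eq_zero_left hw'
  rw [eq_sub_of_add_eq (eq_sub_of_add_eq hc), ← mulVec_mulVec, dotProduct_sub, dotProduct_sub,
    dotProduct_one, dotProduct_smul, dotProduct_comm lam y, hy, dotProduct_mulVec lam,
    ← mulVec_transpose, diagonal_transpose, neg_dotProduct, smul_zero]
  ring

theorem dotProduct_mulVec_sum_smul_self_eq {n ι : Type*} [Fintype n] [Fintype ι]
    {K : ι → Matrix n n ℝ} {w : n → ℝ} {θ : ι → ℝ} {α : ℝ}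
    (hKKT : ∀ ℓ, -(1 / 2) * (w ⬝ᵥ K ℓ *ᵥ w) + α - θ ℓ = 0) {d : ι → ℝ} (hd : ∑ ℓ, d ℓ = 1) :
    w ⬝ᵥ (∑ ℓ, d ℓ • K ℓ) *ᵥ w = 2 * α - 2 * ∑ ℓ, d ℓ * θ ℓ := calc
  _ = ∑ ℓ, (2 * α * d ℓ - 2 * (d ℓ * θ ℓ)) := by
    rw [dotProduct_sum_smul_mulVec]
    exact Finset.sum_congr rfl fun ℓ _ => by linear_combination -2 * d ℓ * hKKT ℓ
  _ = 2 * α - 2 * ∑ ℓ, d ℓ * θ ℓ := by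
    rw [Finset.sum_sub_distrib, ← Finset.mul_sum, ← Finset.mul_sum, hd, mul_one]

namespace IsPStationaryWith

variable {m L : ℕ} {K : Fin L → Matrix (Fin m) (Fin m) ℝ} {y : Fin m → ℝ} {C γ : ℝ}
  {w' : Fin m → ℝ} {d' : Fin L → ℝ} {b' : ℝ} {u' : Fin m → ℝ}
  {θ : Fin L → ℝ} {α : ℝ} {lam : Fin m → ℝ}

theorem sub_le_half_dotProduct_mulVec (hP : IsPStationaryWith K y C γ w' d' b' u' θ α lam)
    (hK : ∀ ℓ, (K ℓ).PosSemidef) {w : Fin m → ℝ} {d : Fin L → ℝ} {b : ℝ} {u : Fin m → ℝ}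
    (hd0 : ∀ ℓ, 0 ≤ d ℓ) (hd1 : ∑ ℓ, d ℓ = 1)
    (hc : u + (diagonal y * ∑ ℓ, d ℓ • K ℓ) *ᵥ w + b • y = 1) :
    lam ⬝ᵥ u - ∑ i, lam i - α ≤ 1 / 2 * (w ⬝ᵥ (∑ ℓ, d ℓ • K ℓ) *ᵥ w) := by
  obtain ⟨-, -, hθ0, -, -, hw', hKKT, hy, -⟩ := hP
  have hPSD : (∑ ℓ, d ℓ • K ℓ).PosSemidef := posSemidef_sum _ fun ℓ _ => (hK ℓ).smul (hd0 ℓ)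
  have hdθ : 0 ≤ ∑ ℓ, d ℓ * θ ℓ := Finset.sum_nonneg fun ℓ _ => mul_nonneg (hd0 ℓ) (hθ0 ℓ)
  linarith [hPSD.two_mul_dotProduct_mulVec_sub_le w w', dotProduct_eq_of_constraint hw' hy hc,
    dotProduct_mulVec_sum_smul_self_eq hKKT hd1]

theorem half_dotProduct_mulVec_eq (hP : IsPStationaryWith K y C γ w' d' b' u' θ α lam) :
    1 / 2 * (w' ⬝ᵥ (∑ ℓ, d' ℓ • K ℓ) *ᵥ w') = lam ⬝ᵥ u' - ∑ i, lam i - α := by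
  obtain ⟨-, hd1, -, hθd, hc, hw', hKKT, hy, -⟩ := hP
  have hdθ : ∑ ℓ, d' ℓ * θ ℓ = 0 := Finset.sum_eq_zero fun ℓ _ => by rw [mul_comm, hθd ℓ]
  linarith [dotProduct_eq_of_constraint hw' hy hc, dotProduct_mulVec_sum_smul_self_eq hKKT hd1]

theorem isLocalMin (hP : IsPStationaryWith K y C γ w' d' b' u' θ α lam) (hC : 0 < C)
    (hγ : 0 < γ) : IsLocalMin (fun v => C * l0pos v + lam ⬝ᵥ v) u' := by
  obtain ⟨-, -, -, -, -, -, -, -, hprox⟩ := hP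
  have hcoord := le_of_forall_sum_le (g := fun i s =>
      C * (if 0 < s then 1 else 0) + 1 / (2 * γ) * (s - (u' i - γ * lam i)) ^ 2) fun v => by
    simpa only [Finset.mul_sum, mul_l0pos_add_sum] using hprox v
  have hsep : (fun v => C * l0pos v + lam ⬝ᵥ v) =
      fun v => ∑ i, (C * (if 0 < v i then 1 else 0) + lam i * v i) :=
    funext fun v => mul_l0pos_add_sum C _ v
  rw [hsep]
  exact isLocalMin_sum_apply fun i => isLocalMin_mul_ite_add_mul hC <|
    (eq_or_ne (lam i) 0).imp_right (eq_zero_and_neg_of_l0_prox hC.le hγ (hcoord i))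

end IsPStationaryWith

theorem stmt_8_general (m L : ℕ) (y : Fin m → ℝ)
    (K : Fin L → Matrix (Fin m) (Fin m) ℝ) (hK : ∀ ℓ, (K ℓ).PosDef)
    (C : ℝ) (hC : 0 < C)
    (Feasible : (Fin m → ℝ) × (Fin L → ℝ) × ℝ × (Fin m → ℝ) → Prop)
    (hFeasible : ∀ (w : Fin m → ℝ) (d : Fin L → ℝ) (b : ℝ) (u : Fin m → ℝ),
      Feasible (w, d, b, u) ↔
        (∀ ℓ, 0 ≤ d ℓ) ∧ (∑ ℓ, d ℓ) = 1 ∧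
        u + (Matrix.diagonal y * ∑ ℓ, d ℓ • K ℓ).mulVec w + b • y = 1)
    (wstar : Fin m → ℝ) (dstar : Fin L → ℝ) (bstar : ℝ) (ustar : Fin m → ℝ)
    (γ : ℝ) (hγ : 0 < γ)
    (hP : IsPStationary K y C γ wstar dstar bstar ustar) :
    Feasible (wstar, dstar, bstar, ustar) ∧
    ∃ δ > 0, ∀ (w : Fin m → ℝ) (d : Fin L → ℝ) (b : ℝ) (u : Fin m → ℝ),
      Feasible (w, d, b, u) →
      dist ((w, d, b, u) : (Fin m → ℝ) × (Fin L → ℝ) × ℝ × (Fin m → ℝ))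
        (wstar, dstar, bstar, ustar) < δ →
      (1 / 2) * (wstar ⬝ᵥ (∑ ℓ, dstar ℓ • K ℓ).mulVec wstar) + C * l0pos ustar ≤
      (1 / 2) * (w ⬝ᵥ (∑ ℓ, d ℓ • K ℓ).mulVec w) + C * l0pos u := by
  obtain ⟨θ, α, lam, hP⟩ := hP
  obtain ⟨hd0star, hd1star, -, -, hcstar, -⟩ := id hP
  refine ⟨(hFeasible _ _ _ _).2 ⟨hd0star, hd1star, hcstar⟩, ?_⟩
  have hlocal := (hP.isLocalMin hC hγ).comp_continuous
    (g := fun p : (Fin m → ℝ) × (Fin L → ℝ) × ℝ × (Fin m → ℝ) => p.2.2.2)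
    (b := (wstar, dstar, bstar, ustar)) (by fun_prop)
  obtain ⟨δ, hδ, hball⟩ := Metric.eventually_nhds_iff.1 hlocal
  refine ⟨δ, hδ, fun w d b u hfeas hdist => ?_⟩
  obtain ⟨hd0, hd1, hc⟩ := (hFeasible w d b u).1 hfeas
  have hu := hball hdist
  simp only [Function.comp_apply] at hu
  linarith [hP.half_dotProduct_mulVec_eq,
    hP.sub_le_half_dotProduct_mulVec (fun ℓ => (hK ℓ).posSemidef) hd0 hd1 hc]

/-- Theorem 4, part 2: any P-stationary point (with `γ > 0`) is a local minimizer of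
the constrained MKL-L₀/₁-SVM problem. -/
theorem stmt_8 (m L : ℕ) (hm : 1 ≤ m) (hL : 1 ≤ L)
    (y : Fin m → ℝ) (hy : ∀ i, y i = 1 ∨ y i = -1)
    (K : Fin L → Matrix (Fin m) (Fin m) ℝ) (hK : ∀ ℓ, (K ℓ).PosDef)
    (C : ℝ) (hC : 0 < C)
    (Feasible : (Fin m → ℝ) × (Fin L → ℝ) × ℝ × (Fin m → ℝ) → Prop)
    (hFeasible : ∀ (w : Fin m → ℝ) (d : Fin L → ℝ) (b : ℝ) (u : Fin m → ℝ),
      Feasible (w, d, b, u) ↔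
        (∀ ℓ, 0 ≤ d ℓ) ∧ (∑ ℓ, d ℓ) = 1 ∧
        u + (Matrix.diagonal y * ∑ ℓ, d ℓ • K ℓ).mulVec w + b • y = 1)
    (wstar : Fin m → ℝ) (dstar : Fin L → ℝ) (bstar : ℝ) (ustar : Fin m → ℝ)
    (γ : ℝ) (hγ : 0 < γ)
    (hP : IsPStationary K y C γ wstar dstar bstar ustar) :
    Feasible (wstar, dstar, bstar, ustar) ∧
    ∃ δ > 0, ∀ (w : Fin m → ℝ) (d : Fin L → ℝ) (b : ℝ) (u : Fin m → ℝ),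
      Feasible (w, d, b, u) →
      dist ((w, d, b, u) : (Fin m → ℝ) × (Fin L → ℝ) × ℝ × (Fin m → ℝ))
        (wstar, dstar, bstar, ustar) < δ →
      (1 / 2) * (wstar ⬝ᵥ (∑ ℓ, dstar ℓ • K ℓ).mulVec wstar) + C * l0pos ustar ≤
      (1 / 2) * (w ⬝ᵥ (∑ ℓ, d ℓ • K ℓ).mulVec w) + C * l0pos u :=
  stmt_8_general m L y K hK C hC Feasible hFeasible wstar dstar bstar ustar γ hγ hP
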